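/- arXiv:1709.06584 — 2 statements merged into one kernel-verified Lean document; each statement's English description precedes it below -/
import Mathlib

section
/- Let p : ℤ → ℝ satisfy: p(k) ≥ 0 for all k, p(k) = 0 for |k| > R where R > 1 is an integer, p(R) > 0, and p(k) ≥ p(−k) for every k ≥ 1 with strict inequality for some k. Let ν̄ be an invariant probability measure for the generator L of the ASEP on ℤ with a blockage at the origin such that ⟨ν̄, C_{−1,1}⟩ = 0, and let ν* be a Cesàro weak limit of ν̄ under translation (ν* = lim_k (1/n_k) Σ_{i=1}^{n_k} τ_i ν̄ weakly, for some n_k → ∞) such that ⟨ν*, η_x⟩ = 0 for every x ∈ ℤ. Then ⟨ν̄, η_x⟩ = 0 for every x > 0. -/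
open MeasureTheory Filter
open scoped NNReal

/-- A configuration of the exclusion process: for each site `x : ℤ`,
whether the site is occupied. -/
abbrev Config : Type := ℤ → Bool

/-- The occupation number `η(x) ∈ {0,1}` as a real number. -/
noncomputable def val (η : Config) (x : ℤ) : ℝ := if η x then 1 else 0

/-- The configuration `η^{x,y}` obtained from `η` by exchanging the values
at sites `x` and `y`. -/
def swapConf (η : Config) (x y : ℤ) : Config := fun z =>
  if z = x then η y else if z = y then η x else η z

/-- A local (cylinder) function: it depends on only finitely many coordinates. -/
def IsLocal (f : Config → ℝ) : Prop :=
  ∃ s : Finset ℤ, ∀ η ζ : Config, (∀ x ∈ s, η x = ζ x) → f η = f ζ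

/-- The generator of the ASEP on `ℤ` with a blockage at the origin:
`L f (η) = Σ_{x,y ≠ 0} p (y-x) η(x) (1-η(y)) (f(η^{x,y}) - f(η))`. -/
noncomputable def gen (p : ℤ → ℝ) (f : Config → ℝ) (η : Config) : ℝ :=
  ∑' q : ℤ × ℤ,
    if q.1 ≠ 0 ∧ q.2 ≠ 0 then
      p (q.2 - q.1) * val η q.1 * (1 - val η q.2) * (f (swapConf η q.1 q.2) - f η)
    else 0

/-- The current across the bond `(i,j)`:
`C_{i,j}(η) = Σ_{x ≤ i, y ≥ j, x ≠ 0, y ≠ 0}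
  [p(y-x) η(x)(1-η(y)) - p(x-y) η(y)(1-η(x))]`. -/
noncomputable def current (p : ℤ → ℝ) (i j : ℤ) (η : Config) : ℝ :=
  ∑' q : ℤ × ℤ,
    if q.1 ≤ i ∧ j ≤ q.2 ∧ q.1 ≠ 0 ∧ q.2 ≠ 0 then
      p (q.2 - q.1) * val η q.1 * (1 - val η q.2)
        - p (q.1 - q.2) * val η q.2 * (1 - val η q.1)
    else 0

/-- A measure `ν` is invariant for the generator `L` if `∫ L f dν = 0`
for every local function `f`. -/
def IsInvariantMeasure (p : ℤ → ℝ) (ν : Measure Config) : Prop :=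
  ∀ f : Config → ℝ, IsLocal f → ∫ η, gen p f η ∂ν = 0

/-- The translation `τ_i` on configurations: `(τ_i η)(j) = η (j + i)`. -/
def transl (i : ℤ) (η : Config) : Config := fun j => η (j + i)

/-- The translation `τ_i` on measures (pushforward). -/
noncomputable def translMeasure (i : ℤ) (ν : Measure Config) : Measure Config :=
  Measure.map (transl i) ν

/-- `ν'` is a Cesàro weak limit of `ν` under translation: for some sequence
`n_k → ∞`, the probability measures `(1/n_k) Σ_{i=1}^{n_k} τ_i ν` converge weakly
to `ν'`, i.e. the integrals of every (bounded) continuous function converge.  -/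
def IsCesaroLimit (ν ν' : Measure Config) : Prop :=
  ∃ n : ℕ → ℕ, Tendsto n atTop atTop ∧
    ∀ f : Config → ℝ, Continuous f →
      Tendsto (fun k => (n k : ℝ)⁻¹ * ∑ i ∈ Finset.Icc 1 (n k),
          ∫ η, f η ∂(translMeasure (i : ℤ) ν)) atTop
        (nhds (∫ η, f η ∂ν'))

/-!
Integrating `L η_m = C_{m-1,m} - C_{m,m+1}` against `ν` shows that the mean current vanishes
across every bond `(m, m+1)` with `m ≥ 0`. Right of the blockage this mean current splits into
a nonnegative drift part `Σ (p k - p (-k)) ν(η_u = 1, η_{u+k} = 0)` and a gradient part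
`Σ p (-k) (ρ u - ρ (u + k))`. Summed over the bonds of `[x, y)`, the gradient part telescopes
to a multiple of the density in a window around `y`, and since the Cesàro means of `ρ` vanish,
such windows are light somewhere far out. Hence `ν(η_x = 1, η_{x+k₀} = 0) = 0` for `x ≥ R`, so
`ρ` increases along `x + k₀ ℕ`; by the same Cesàro argument `ρ = 0` on `[R, ∞)`. Finally, if
`ρ` vanishes to the right of `x ≥ 1`, the current through `(x, x+1)` is at least `p R ρ x`,
which gives `ρ x = 0` by descending induction.
-/

theorem Continuous.integrable_of_compactSpace {X E : Type*} [TopologicalSpace X] [CompactSpace X]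
    [MeasurableSpace X] [OpensMeasurableSpace X] [NormedAddCommGroup E] {μ : Measure X}
    [IsFiniteMeasure μ] {f : X → E} (hf : Continuous f) : Integrable f μ :=
  hf.integrable_of_hasCompactSupport (.of_compactSpace f)

section Windows

lemma sum_Ico_sub_shift {M : Type*} [AddCommGroup M] (f : ℤ → M) {x y k : ℤ} (hxy : x ≤ y)
    (hk : 0 ≤ k) :
    ∑ m ∈ Finset.Ico x y, (f m - f (m + k)) =
      ∑ m ∈ Finset.Ico x (x + k), f m - ∑ m ∈ Finset.Ico y (y + k), f m := by
  have hcons : ∀ a b c : ℤ, a ≤ b → b ≤ c →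
      ∑ m ∈ Finset.Ico a b, f m + ∑ m ∈ Finset.Ico b c, f m = ∑ m ∈ Finset.Ico a c, f m :=
    fun a b c hab hbc => by
      rw [← Finset.sum_union (Finset.Ico_disjoint_Ico_consecutive a b c),
        Finset.Ico_union_Ico_eq_Ico hab hbc]
  rw [Finset.sum_sub_distrib, Finset.sum_Ico_add' f x y k, sub_eq_sub_iff_add_eq_add,
    hcons x y (y + k) hxy (by omega), hcons x (x + k) (y + k) (by omega) (by omega)]

lemma sum_Ioc_add_right {M : Type*} [AddCommMonoid M] (f : ℤ → M) (a b c : ℤ) :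
    ∑ u ∈ Finset.Ioc a b, f (u + c) = ∑ u ∈ Finset.Ioc (a + c) (b + c), f u := by
  rw [← Finset.map_add_right_Ioc, Finset.sum_map]
  rfl

variable {a : ℤ → ℝ}

lemma neg_mul_window_le_sum_Ico_sum_Ioc_sub (ha : ∀ u, 0 ≤ a u) {x y k w : ℤ} (hxy : x ≤ y)
    (hk : 0 ≤ k) (hkw : k ≤ w) :
    -(w * ∑ u ∈ Finset.Ioc (y - w) (y + w), a u) ≤
      ∑ m ∈ Finset.Ico x y, ∑ u ∈ Finset.Ioc (m - k) m, (a u - a (u + k)) := by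
  set G : ℤ → ℝ := fun m => ∑ u ∈ Finset.Ioc (m - k) m, a u
  have hblock : ∀ m, ∑ u ∈ Finset.Ioc (m - k) m, (a u - a (u + k)) = G m - G (m + k) := by
    intro m
    rw [Finset.sum_sub_distrib, sum_Ioc_add_right, sub_add_cancel]
    simp only [G, add_sub_cancel_right]
  have hG : ∀ m ∈ Finset.Ico y (y + k), G m ≤ ∑ u ∈ Finset.Ioc (y - w) (y + w), a u := by
    intro m hm
    rw [Finset.mem_Ico] at hm
    exact Finset.sum_le_sum_of_subset_of_nonneg (Finset.Ioc_subset_Ioc (by omega) (by omega))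
      fun u _ _ => ha u
  have hcard : ((Finset.Ico y (y + k)).card : ℝ) ≤ w := by
    rw [Int.card_Ico]; exact_mod_cast (show ((y + k - y).toNat : ℤ) ≤ w by omega)
  rw [Finset.sum_congr rfl fun m _ => hblock m, sum_Ico_sub_shift G hxy hk]
  have hW : 0 ≤ ∑ u ∈ Finset.Ioc (y - w) (y + w), a u := Finset.sum_nonneg fun u _ => ha u
  have hfirst : 0 ≤ ∑ m ∈ Finset.Ico x (x + k), G m :=
    Finset.sum_nonneg fun m _ => Finset.sum_nonneg fun u _ => ha u
  have hlast := Finset.sum_le_card_nsmul _ _ _ hG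
  rw [nsmul_eq_mul] at hlast
  nlinarith

lemma sum_Ioc_sum_window_le (ha : ∀ u, 0 ≤ a u) {w b c : ℤ} (hw : 0 ≤ w) :
    ∑ y ∈ Finset.Ioc (b + w) (c - w), ∑ u ∈ Finset.Ioc (y - w) (y + w), a u ≤
      2 * w * ∑ u ∈ Finset.Ioc b c, a u := by
  have hwin : ∀ y, ∑ u ∈ Finset.Ioc (y - w) (y + w), a u = ∑ j ∈ Finset.Ioc (-w) w, a (y + j) :=
    fun y => by
      rw [Finset.sum_congr rfl fun j _ => congrArg a (add_comm y j), sum_Ioc_add_right,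
        neg_add_eq_sub, add_comm w y]
  rw [Finset.sum_congr rfl fun y _ => hwin y, Finset.sum_comm]
  calc ∑ j ∈ Finset.Ioc (-w) w, ∑ y ∈ Finset.Ioc (b + w) (c - w), a (y + j)
      ≤ ∑ j ∈ Finset.Ioc (-w) w, ∑ u ∈ Finset.Ioc b c, a u := by
        refine Finset.sum_le_sum fun j hj => ?_
        rw [Finset.mem_Ioc] at hj
        rw [sum_Ioc_add_right]
        exact Finset.sum_le_sum_of_subset_of_nonneg (Finset.Ioc_subset_Ioc (by omega) (by omega))
          fun u _ _ => ha u
    _ = 2 * w * ∑ u ∈ Finset.Ioc b c, a u := by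
        rw [Finset.sum_const, Int.card_Ioc, nsmul_eq_mul]
        congr 1
        exact_mod_cast (show ((w - -w).toNat : ℤ) = 2 * w by omega)

lemma sum_Icc_natCast_eq_sum_Ioc {M : Type*} [AddCommMonoid M] (f : ℤ → M) (N : ℕ) :
    ∑ i ∈ Finset.Icc 1 N, f i = ∑ u ∈ Finset.Ioc 0 (N : ℤ), f u := by
  rw [← Finset.sum_image (Nat.cast_injective.injOn)]
  congr 1
  ext u
  simp only [Finset.mem_image, Finset.mem_Icc, Finset.mem_Ioc]
  constructor
  · rintro ⟨i, hi, rfl⟩; omega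
  · intro hu; exact ⟨u.toNat, by omega, by omega⟩

lemma sub_mul_le_sum_Icc_of_le_window_sum (ha : ∀ u, 0 ≤ a u) {w B : ℤ} {δ : ℝ} (hw : 0 ≤ w)
    (hB : 0 ≤ B) (hδ : 0 ≤ δ) (h : ∀ y, B ≤ y → δ ≤ ∑ u ∈ Finset.Ioc (y - w) (y + w), a u)
    (N : ℕ) : ((N : ℝ) - (B + 2 * w)) * δ ≤ 2 * w * ∑ i ∈ Finset.Icc 1 N, a i := by
  set Y := Finset.Ioc (B + w) (N - w)
  have hcard : (N : ℝ) - (B + 2 * w) ≤ Y.card := by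
    have : (N : ℤ) - (B + 2 * w) ≤ Y.card := by simp only [Y, Int.card_Ioc]; omega
    exact_mod_cast this
  calc ((N : ℝ) - (B + 2 * w)) * δ ≤ Y.card • δ := by
        rw [nsmul_eq_mul]; exact mul_le_mul_of_nonneg_right hcard hδ
    _ ≤ ∑ y ∈ Y, ∑ u ∈ Finset.Ioc (y - w) (y + w), a u :=
        Finset.card_nsmul_le_sum _ _ _ fun y hy =>
          h y (by simp only [Y, Finset.mem_Ioc] at hy; omega)
    _ ≤ 2 * w * ∑ u ∈ Finset.Ioc B N, a u := sum_Ioc_sum_window_le ha hw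
    _ ≤ 2 * w * ∑ u ∈ Finset.Ioc 0 (N : ℤ), a u := by
        gcongr
        exact fun u _ _ => ha u
    _ = 2 * w * ∑ i ∈ Finset.Icc 1 N, a i := by rw [sum_Icc_natCast_eq_sum_Ioc]

lemma le_zero_of_forall_le_window_sum (ha : ∀ u, 0 ≤ a u) {n : ℕ → ℕ}
    (hn : Tendsto n atTop atTop)
    (hces : Tendsto (fun k => (n k : ℝ)⁻¹ * ∑ i ∈ Finset.Icc 1 (n k), a i) atTop (nhds 0))
    {w B : ℤ} {δ : ℝ} (h : ∀ y, B ≤ y → δ ≤ ∑ u ∈ Finset.Ioc (y - w) (y + w), a u) :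
    δ ≤ 0 := by
  by_contra! hδ
  have hw : 0 < w := by
    by_contra! hw
    have := h B le_rfl
    rw [Finset.Ioc_eq_empty (by omega), Finset.sum_empty] at this
    linarith
  set b := max B 0
  have hmass := sub_mul_le_sum_Icc_of_le_window_sum ha hw.le (le_max_right B 0) hδ.le
    fun y hy => h y ((le_max_left B 0).trans hy)
  have hlow : Tendsto (fun k => δ / (2 * w) - (b + 2 * w) * δ / (2 * w) * (n k : ℝ)⁻¹) atTop
      (nhds (δ / (2 * w))) := by
    have hinv : Tendsto (fun k => (n k : ℝ)⁻¹) atTop (nhds 0) :=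
      tendsto_inv_atTop_zero.comp (tendsto_natCast_atTop_atTop.comp hn)
    simpa using tendsto_const_nhds.sub (hinv.const_mul ((b + 2 * w) * δ / (2 * w)))
  have hwR : (0 : ℝ) < 2 * w := by exact_mod_cast (by omega : (0 : ℤ) < 2 * w)
  refine (div_pos hδ hwR).not_ge (le_of_tendsto_of_tendsto hlow hces ?_)
  filter_upwards [hn.eventually_ge_atTop 1] with k hk
  have hN : (0 : ℝ) < n k := by exact_mod_cast hk
  calc δ / (2 * w) - (b + 2 * w) * δ / (2 * w) * (n k : ℝ)⁻¹
      = (n k - (b + 2 * w)) * δ / (2 * w) * (n k : ℝ)⁻¹ := by field_simp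
    _ ≤ (∑ i ∈ Finset.Icc 1 (n k), a i) * (n k : ℝ)⁻¹ := by
        gcongr
        rw [div_le_iff₀ hwR]
        linarith [hmass (n k)]
    _ = _ := mul_comm _ _

end Windows

lemma val_nonneg (η : Config) (x : ℤ) : 0 ≤ val η x := by
  unfold val; split <;> norm_num

lemma val_le_one (η : Config) (x : ℤ) : val η x ≤ 1 := by
  unfold val; split <;> norm_num

@[fun_prop]
lemma continuous_val (x : ℤ) : Continuous fun η : Config => val η x :=
  (continuous_of_discreteTopology (f := fun b : Bool => if b then (1 : ℝ) else 0)).comp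
    (continuous_apply x)

@[fun_prop]
lemma continuous_swapConf (u v : ℤ) : Continuous fun η : Config => swapConf η u v :=
  continuous_pi fun z => by unfold swapConf; split_ifs <;> exact continuous_apply _

lemma val_swapConf_of_ne (η : Config) {u v z : ℤ} (hu : z ≠ u) (hv : z ≠ v) :
    val (swapConf η u v) z = val η z := by
  simp [val, swapConf, hu, hv]

lemma swapConf_self (η : Config) (u : ℤ) : swapConf η u u = η := by
  funext z; unfold swapConf; split_ifs <;> simp_all

lemma val_swapConf_sub_val (η : Config) {u v : ℤ} (huv : u ≠ v) (m : ℤ) :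
    val (swapConf η u v) m - val η m
      = if u = m then val η v - val η u else if v = m then val η u - val η v else 0 := by
  rcases eq_or_ne u m with rfl | hum
  · simp [val, swapConf]
  · rcases eq_or_ne v m with rfl | hvm
    · simp [val, swapConf, hum.symm, huv]
    · simp [val_swapConf_of_ne η hum.symm hvm.symm, hum, hvm]

lemma mul_val_mul_one_sub_val_mul_sub (c : ℝ) (η : Config) (x y : ℤ) :
    c * val η x * (1 - val η y) * (val η x - val η y) = c * val η x * (1 - val η y) := by
  unfold val; split_ifs <;> ring

lemma mul_val_mul_one_sub_val_mul_sub' (c : ℝ) (η : Config) (x y : ℤ) :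
    c * val η x * (1 - val η y) * (val η y - val η x) = -(c * val η x * (1 - val η y)) := by
  unfold val; split_ifs <;> ring

noncomputable def currentSummand (p : ℤ → ℝ) (i j : ℤ) (η : Config) (q : ℤ × ℤ) : ℝ :=
  if q.1 ≤ i ∧ j ≤ q.2 ∧ q.1 ≠ 0 ∧ q.2 ≠ 0 then
    p (q.2 - q.1) * val η q.1 * (1 - val η q.2) - p (q.1 - q.2) * val η q.2 * (1 - val η q.1)
  else 0

noncomputable def genSummand (p : ℤ → ℝ) (f : Config → ℝ) (η : Config) (q : ℤ × ℤ) : ℝ :=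
  if q.1 ≠ 0 ∧ q.2 ≠ 0 then
    p (q.2 - q.1) * val η q.1 * (1 - val η q.2) * (f (swapConf η q.1 q.2) - f η)
  else 0

lemma currentSummand_pred_sub_add_swap (p : ℤ → ℝ) (m : ℤ) (η : Config) (u v : ℤ) :
    (currentSummand p (m - 1) m η (u, v) - currentSummand p m (m + 1) η (u, v)
        - genSummand p (fun ζ => val ζ m) η (u, v))
      + (currentSummand p (m - 1) m η (v, u) - currentSummand p m (m + 1) η (v, u)
        - genSummand p (fun ζ => val ζ m) η (v, u)) = 0 := by
  unfold currentSummand genSummand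
  rcases eq_or_ne u v with rfl | huv
  · simp only [swapConf_self, sub_self, mul_zero]
    split_ifs <;> first | omega | ring
  · simp only [val_swapConf_sub_val η huv, val_swapConf_sub_val η huv.symm]
    split_ifs <;> first
      | omega
      | (subst_vars
         (try simp only [mul_val_mul_one_sub_val_mul_sub, mul_val_mul_one_sub_val_mul_sub'])
         ring)

section FiniteRange

variable {p : ℤ → ℝ} {R : ℤ}

lemma current_eq_sum_of_subset (hrange : ∀ k : ℤ, R < |k| → p k = 0) {i j : ℤ} (hij : i < j)
    (S : Finset (ℤ × ℤ)) (hS : ∀ u v, u ≤ i → j ≤ v → u ≠ 0 → v ≠ 0 → v - u ≤ R → (u, v) ∈ S)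
    (η : Config) :
    current p i j η = ∑ q ∈ S, currentSummand p i j η q := by
  refine tsum_eq_sum fun ⟨u, v⟩ huv => ?_
  show currentSummand p i j η (u, v) = 0
  unfold currentSummand
  split_ifs with h
  · have hR : R < v - u := by
      by_contra! hle
      exact huv (hS u v h.1 h.2.1 h.2.2.1 h.2.2.2 hle)
    rw [hrange _ (by rw [abs_of_pos (by omega)]; omega),
      hrange _ (by rw [abs_of_neg (by omega)]; omega)]
    ring
  · rfl

lemma gen_val_eq_sum_of_subset (hrange : ∀ k : ℤ, R < |k| → p k = 0) (m : ℤ)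
    (S : Finset (ℤ × ℤ)) (hS : ∀ u v, u = m ∨ v = m → |v - u| ≤ R → (u, v) ∈ S)
    (η : Config) :
    gen p (fun ζ => val ζ m) η = ∑ q ∈ S, genSummand p (fun ζ => val ζ m) η q := by
  refine tsum_eq_sum fun ⟨u, v⟩ huv => ?_
  show genSummand p (fun ζ => val ζ m) η (u, v) = 0
  unfold genSummand
  split_ifs
  · by_cases hm : u = m ∨ v = m
    · rw [hrange _ (by by_contra! hle; exact huv (hS u v hm hle))]
      ring
    · push Not at hm
      simp only [val_swapConf_of_ne η (Ne.symm hm.1) (Ne.symm hm.2)]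
      ring
  · rfl

lemma current_pred_sub_current (hrange : ∀ k : ℤ, R < |k| → p k = 0) (m : ℤ) (η : Config) :
    current p (m - 1) m η - current p m (m + 1) η = gen p (fun ζ => val ζ m) η := by
  set S := Finset.Icc (m - R) (m + R) ×ˢ Finset.Icc (m - R) (m + R)
  have hcurrent : ∀ i j, i < j → m - 1 ≤ i → j ≤ m + 1 →
      current p i j η = ∑ q ∈ S, currentSummand p i j η q := fun i j hij hi hj =>
    current_eq_sum_of_subset hrange hij S (fun u v hu hv _ _ huv => by
      simp only [S, Finset.mem_product, Finset.mem_Icc]; omega) η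
  rw [hcurrent (m - 1) m (by omega) le_rfl (by omega),
    hcurrent m (m + 1) (by omega) (by omega) le_rfl,
    gen_val_eq_sum_of_subset hrange m S fun u v huv hle => by
      rw [abs_le] at hle; simp only [S, Finset.mem_product, Finset.mem_Icc]; omega,
    ← sub_eq_zero, ← Finset.sum_sub_distrib, ← Finset.sum_sub_distrib]
  refine Finset.sum_involution (fun q _ => q.swap)
    (fun q _ => currentSummand_pred_sub_add_swap p m η q.1 q.2)
    (fun q _ hne hswap => hne ?_) (fun q hq => by simp_all [S]) (fun q _ => q.swap_swap)
  have := currentSummand_pred_sub_add_swap p m η q.1 q.2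
  rw [show (q.2, q.1) = q from hswap] at this
  linarith

lemma continuous_current (hrange : ∀ k : ℤ, R < |k| → p k = 0) {i j : ℤ} (hij : i < j) :
    Continuous (current p i j) := by
  have hsum : current p i j = fun η => ∑ q ∈ Finset.Icc (j - R) i ×ˢ Finset.Icc j (i + R),
      currentSummand p i j η q :=
    funext <| current_eq_sum_of_subset hrange hij _ fun u v h₁ h₂ _ _ h₃ => by
      simp only [Finset.mem_product, Finset.mem_Icc]; omega
  rw [hsum]
  refine continuous_finsetSum _ fun q _ => ?_
  unfold currentSummand
  split_ifs <;> fun_prop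

lemma continuous_gen_val (hrange : ∀ k : ℤ, R < |k| → p k = 0) (m : ℤ) :
    Continuous (gen p fun ζ => val ζ m) := by
  have hsum : gen p (fun ζ => val ζ m) = fun η => ∑ q ∈ Finset.Icc (m - R) (m + R) ×ˢ
      Finset.Icc (m - R) (m + R), genSummand p (fun ζ => val ζ m) η q :=
    funext <| gen_val_eq_sum_of_subset hrange m _ fun u v huv hle => by
      rw [abs_le] at hle; simp only [Finset.mem_product, Finset.mem_Icc]; omega
  rw [hsum]
  refine continuous_finsetSum _ fun q _ => ?_
  unfold genSummand
  split_ifs <;> fun_prop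

lemma isLocal_val (m : ℤ) : IsLocal fun η => val η m :=
  ⟨{m}, fun η ζ h => by simp [val, h m (Finset.mem_singleton_self m)]⟩

lemma integral_current_eq_zero (hrange : ∀ k : ℤ, R < |k| → p k = 0) {ν : Measure Config}
    [IsFiniteMeasure ν] (hinv : IsInvariantMeasure p ν) (hcur : ∫ η, current p (-1) 1 η ∂ν = 0)
    {m : ℤ} (hm : 0 ≤ m) : ∫ η, current p m (m + 1) η ∂ν = 0 := by
  induction m, hm using Int.leInduction with
  | base =>
    rw [← hcur]
    refine integral_congr_ae (.of_forall fun η => tsum_congr fun q => if_congr ?_ rfl rfl)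
    constructor <;> (rintro ⟨h₁, h₂, h₃, h₄⟩; exact ⟨by omega, h₂, h₃, h₄⟩)
  | succ m hm ih =>
    have hstep : current p m (m + 1) = fun η =>
        current p (m + 1) (m + 1 + 1) η + gen p (fun ζ => val ζ (m + 1)) η := by
      funext η
      rw [← current_pred_sub_current hrange, add_sub_cancel, add_sub_cancel_right]
    rw [hstep, integral_add (continuous_current hrange (by omega)).integrable_of_compactSpace
      (continuous_gen_val hrange _).integrable_of_compactSpace, hinv _ (isLocal_val _)] at ih
    simpa using ih

end FiniteRange

noncomputable def density (ν : Measure Config) (x : ℤ) : ℝ := ∫ η, val η x ∂ν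

noncomputable def occVac (ν : Measure Config) (x y : ℤ) : ℝ := ∫ η, val η x * (1 - val η y) ∂ν

section Correlations

variable (ν : Measure Config)

lemma density_nonneg (x : ℤ) : 0 ≤ density ν x :=
  integral_nonneg fun η => val_nonneg η x

lemma occVac_nonneg (x y : ℤ) : 0 ≤ occVac ν x y :=
  integral_nonneg fun η => mul_nonneg (val_nonneg η x) (sub_nonneg.mpr (val_le_one η y))

variable [IsFiniteMeasure ν]

lemma occVac_sub_occVac (x y : ℤ) : occVac ν x y - occVac ν y x = density ν x - density ν y := by
  unfold occVac density
  rw [← integral_sub (by fun_prop : Continuous _).integrable_of_compactSpace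
      (by fun_prop : Continuous _).integrable_of_compactSpace,
    ← integral_sub (continuous_val x).integrable_of_compactSpace
      (continuous_val y).integrable_of_compactSpace]
  congr 1 with η
  ring

lemma density_sub_le_occVac (x y : ℤ) : density ν x - density ν y ≤ occVac ν x y := by
  rw [← occVac_sub_occVac]
  linarith [occVac_nonneg ν y x]

end Correlations

noncomputable def jumpFlux (p : ℤ → ℝ) (η : Config) (u k : ℤ) : ℝ :=
  p k * val η u * (1 - val η (u + k)) - p (-k) * val η (u + k) * (1 - val η u)

noncomputable def meanFlux (p : ℤ → ℝ) (ν : Measure Config) (u k : ℤ) : ℝ :=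
  (p k - p (-k)) * occVac ν u (u + k) + p (-k) * (density ν u - density ν (u + k))

lemma integral_jumpFlux (p : ℤ → ℝ) (ν : Measure Config) [IsFiniteMeasure ν] (u k : ℤ) :
    ∫ η, jumpFlux p η u k ∂ν = meanFlux p ν u k := by
  have hsplit : (fun η => jumpFlux p η u k) = fun η =>
      p k * (val η u * (1 - val η (u + k))) - p (-k) * (val η (u + k) * (1 - val η u)) := by
    funext η; unfold jumpFlux; ring
  rw [hsplit, integral_sub (by fun_prop : Continuous _).integrable_of_compactSpace
      (by fun_prop : Continuous _).integrable_of_compactSpace, integral_const_mul,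
    integral_const_mul, meanFlux, ← occVac_sub_occVac]
  unfold occVac
  ring

section FiniteRange

variable {p : ℤ → ℝ} {R : ℤ}

lemma current_eq_sum_jumpFlux (hrange : ∀ k : ℤ, R < |k| → p k = 0) {m : ℤ} (hm : 0 ≤ m)
    (η : Config) :
    current p m (m + 1) η =
      ∑ k ∈ Finset.Icc 1 R, ∑ u ∈ (Finset.Ioc (m - k) m).erase 0, jumpFlux p η u k := by
  set T := (Finset.Icc 1 R).sigma fun k => (Finset.Ioc (m - k) m).erase 0
  rw [current_eq_sum_of_subset hrange (lt_add_one m) (T.image fun x => (x.2, x.2 + x.1)),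
    Finset.sum_image, Finset.sum_sigma]
  · refine Finset.sum_congr rfl fun k hk => Finset.sum_congr rfl fun u hu => ?_
    simp only [Finset.mem_erase, Finset.mem_Ioc] at hu
    simp only [currentSummand, jumpFlux, add_sub_cancel_left, sub_add_cancel_left]
    rw [if_pos ⟨hu.2.2, by omega, hu.1, by omega⟩]
  · rintro ⟨k, u⟩ - ⟨k', u'⟩ - h
    simp only [Prod.mk.injEq] at h
    have : u = u' := h.1
    subst this
    simp_all
  · intro u v hu hv hu0 _ hR
    simp only [Finset.mem_image, Finset.mem_sigma, Finset.mem_Icc, Finset.mem_erase,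
      Finset.mem_Ioc, T]
    refine ⟨⟨v - u, u⟩, ?_, by simp⟩
    dsimp only
    omega

lemma integral_current_eq_sum_meanFlux (hrange : ∀ k : ℤ, R < |k| → p k = 0)
    (ν : Measure Config) [IsFiniteMeasure ν] {m : ℤ} (hm : 0 ≤ m) :
    ∫ η, current p m (m + 1) η ∂ν =
      ∑ k ∈ Finset.Icc 1 R, ∑ u ∈ (Finset.Ioc (m - k) m).erase 0, meanFlux p ν u k := by
  simp_rw [current_eq_sum_jumpFlux hrange hm, ← integral_jumpFlux]
  rw [integral_finsetSum _ fun k _ => integrable_finsetSum _ fun u _ =>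
    (by unfold jumpFlux; fun_prop : Continuous _).integrable_of_compactSpace]
  exact Finset.sum_congr rfl fun k _ => integral_finsetSum _ fun u _ =>
    (by unfold jumpFlux; fun_prop : Continuous _).integrable_of_compactSpace

end FiniteRange

lemma integral_val_translMeasure (ν : Measure Config) (i x : ℤ) :
    ∫ η, val η x ∂(translMeasure i ν) = density ν (x + i) := by
  have htransl : Continuous (transl i) := continuous_pi fun j => continuous_apply (j + i)
  rw [translMeasure, integral_map htransl.aemeasurable (continuous_val x).aestronglyMeasurable]
  rfl

section Densities

variable {p : ℤ → ℝ} {R : ℤ} {ν : Measure Config} [IsFiniteMeasure ν]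

lemma sum_integral_current_eq (hrange : ∀ k : ℤ, R < |k| → p k = 0) (hR : 0 ≤ R) {x y : ℤ}
    (hx : R ≤ x) :
    ∑ m ∈ Finset.Ico x y, ∫ η, current p m (m + 1) η ∂ν =
      ∑ m ∈ Finset.Ico x y, ∑ k ∈ Finset.Icc 1 R,
        ∑ u ∈ Finset.Ioc (m - k) m, (p k - p (-k)) * occVac ν u (u + k) +
      ∑ k ∈ Finset.Icc 1 R, p (-k) *
        ∑ m ∈ Finset.Ico x y, ∑ u ∈ Finset.Ioc (m - k) m, (density ν u - density ν (u + k)) := by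
  have hJ : ∀ m ∈ Finset.Ico x y, ∫ η, current p m (m + 1) η ∂ν =
      ∑ k ∈ Finset.Icc 1 R, ∑ u ∈ Finset.Ioc (m - k) m, meanFlux p ν u k := by
    intro m hm
    rw [Finset.mem_Ico] at hm
    rw [integral_current_eq_sum_meanFlux hrange ν (by omega)]
    refine Finset.sum_congr rfl fun k hk => ?_
    rw [Finset.mem_Icc] at hk
    rw [Finset.erase_eq_of_notMem (by rw [Finset.mem_Ioc]; omega)]
  rw [Finset.sum_congr rfl hJ]
  simp only [meanFlux, Finset.sum_add_distrib, Finset.mul_sum]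
  exact congrArg _ Finset.sum_comm

lemma drift_mul_occVac_le_window (hp : ∀ k, 0 ≤ p k) (hrange : ∀ k : ℤ, R < |k| → p k = 0)
    (hasym : ∀ k : ℤ, 1 ≤ k → p (-k) ≤ p k)
    (hbond : ∀ m, 0 ≤ m → ∫ η, current p m (m + 1) η ∂ν = 0) {k₀ : ℤ} (hk₀ : k₀ ∈ Finset.Icc 1 R)
    {x y : ℤ} (hx : R ≤ x) (hxy : x < y) :
    (p k₀ - p (-k₀)) * occVac ν x (x + k₀) ≤
      (∑ k ∈ Finset.Icc 1 R, p (-k)) * R * ∑ u ∈ Finset.Ioc (y - R) (y + R), density ν u := by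
  have hk₀' := Finset.mem_Icc.mp hk₀
  have hzero : ∑ m ∈ Finset.Ico x y, ∫ η, current p m (m + 1) η ∂ν = 0 :=
    Finset.sum_eq_zero fun m hm => hbond m (by rw [Finset.mem_Ico] at hm; omega)
  rw [sum_integral_current_eq hrange (by omega) hx] at hzero
  have hdriftk : ∀ k ∈ Finset.Icc 1 R, ∀ u, 0 ≤ (p k - p (-k)) * occVac ν u (u + k) :=
    fun k hk u =>
      mul_nonneg (sub_nonneg.mpr (hasym k (Finset.mem_Icc.mp hk).1)) (occVac_nonneg ν _ _)
  have hdrift : (p k₀ - p (-k₀)) * occVac ν x (x + k₀) ≤ ∑ m ∈ Finset.Ico x y,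
      ∑ k ∈ Finset.Icc 1 R, ∑ u ∈ Finset.Ioc (m - k) m, (p k - p (-k)) * occVac ν u (u + k) := by
    calc (p k₀ - p (-k₀)) * occVac ν x (x + k₀)
        ≤ ∑ u ∈ Finset.Ioc (x - k₀) x, (p k₀ - p (-k₀)) * occVac ν u (u + k₀) :=
          Finset.single_le_sum (fun u _ => hdriftk k₀ hk₀ u) (by rw [Finset.mem_Ioc]; omega)
      _ ≤ ∑ k ∈ Finset.Icc 1 R, ∑ u ∈ Finset.Ioc (x - k) x, (p k - p (-k)) * occVac ν u (u + k) :=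
          Finset.single_le_sum (f := fun k => ∑ u ∈ Finset.Ioc (x - k) x,
            (p k - p (-k)) * occVac ν u (u + k))
            (fun k hk => Finset.sum_nonneg fun u _ => hdriftk k hk u) hk₀
      _ ≤ _ := Finset.single_le_sum (f := fun m => ∑ k ∈ Finset.Icc 1 R,
            ∑ u ∈ Finset.Ioc (m - k) m, (p k - p (-k)) * occVac ν u (u + k))
            (fun m _ => Finset.sum_nonneg fun k hk => Finset.sum_nonneg fun u _ => hdriftk k hk u)
            (by rw [Finset.mem_Ico]; omega)
  have hgrad : -((∑ k ∈ Finset.Icc 1 R, p (-k)) * R *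
      ∑ u ∈ Finset.Ioc (y - R) (y + R), density ν u) ≤ ∑ k ∈ Finset.Icc 1 R, p (-k) *
      ∑ m ∈ Finset.Ico x y, ∑ u ∈ Finset.Ioc (m - k) m, (density ν u - density ν (u + k)) := by
    rw [Finset.sum_mul, Finset.sum_mul, ← Finset.sum_neg_distrib]
    refine Finset.sum_le_sum fun k hk => ?_
    rw [Finset.mem_Icc] at hk
    have := neg_mul_window_le_sum_Ico_sum_Ioc_sub (density_nonneg ν) hxy.le (by omega : 0 ≤ k) hk.2
    nlinarith [hp (-k)]
  linarith

lemma density_le_density_add (hp : ∀ k, 0 ≤ p k) (hrange : ∀ k : ℤ, R < |k| → p k = 0)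
    (hasym : ∀ k : ℤ, 1 ≤ k → p (-k) ≤ p k)
    (hbond : ∀ m, 0 ≤ m → ∫ η, current p m (m + 1) η ∂ν = 0) {n : ℕ → ℕ}
    (hn : Tendsto n atTop atTop)
    (hces : Tendsto (fun k => (n k : ℝ)⁻¹ * ∑ i ∈ Finset.Icc 1 (n k), density ν i) atTop (nhds 0))
    {k₀ : ℤ} (hk₀ : k₀ ∈ Finset.Icc 1 R) (hk₀lt : p (-k₀) < p k₀) {x : ℤ} (hx : R ≤ x) :
    density ν x ≤ density ν (x + k₀) := by
  suffices hE : occVac ν x (x + k₀) ≤ 0 by linarith [density_sub_le_occVac ν x (x + k₀)]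
  set C := (∑ k ∈ Finset.Icc 1 R, p (-k)) * R + 1
  have hC : 0 < C := by
    have : (0 : ℝ) ≤ R := by exact_mod_cast (by linarith [Finset.mem_Icc.mp hk₀] : (0 : ℤ) ≤ R)
    have := Finset.sum_nonneg fun k (_ : k ∈ Finset.Icc 1 R) => hp (-k)
    positivity
  have hδ := le_zero_of_forall_le_window_sum (density_nonneg ν) hn hces (w := R) (B := x + 1)
    (δ := (p k₀ - p (-k₀)) * occVac ν x (x + k₀) / C) fun y hy => by
      rw [div_le_iff₀ hC]
      have := drift_mul_occVac_le_window hp hrange hasym hbond hk₀ hx (by omega : x < y)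
      have := Finset.sum_nonneg fun u (_ : u ∈ Finset.Ioc (y - R) (y + R)) => density_nonneg ν u
      nlinarith
  rw [div_nonpos_iff] at hδ
  rcases hδ with ⟨-, hC'⟩ | ⟨hδ, -⟩
  · linarith
  · nlinarith [sub_pos.mpr hk₀lt]

lemma density_eq_zero_of_le (hp : ∀ k, 0 ≤ p k) (hrange : ∀ k : ℤ, R < |k| → p k = 0)
    (hasym : ∀ k : ℤ, 1 ≤ k → p (-k) ≤ p k)
    (hbond : ∀ m, 0 ≤ m → ∫ η, current p m (m + 1) η ∂ν = 0) {n : ℕ → ℕ}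
    (hn : Tendsto n atTop atTop)
    (hces : Tendsto (fun k => (n k : ℝ)⁻¹ * ∑ i ∈ Finset.Icc 1 (n k), density ν i) atTop (nhds 0))
    {k₀ : ℤ} (hk₀ : k₀ ∈ Finset.Icc 1 R) (hk₀lt : p (-k₀) < p k₀) {x : ℤ} (hx : R ≤ x) :
    density ν x = 0 := by
  have hk₀' := Finset.mem_Icc.mp hk₀
  have hmono : ∀ j, 0 ≤ j → density ν x ≤ density ν (x + j * k₀) := by
    intro j hj
    induction j, hj using Int.leInduction with
    | base => simp
    | succ j hj ih =>
      calc density ν x ≤ density ν (x + j * k₀) := ih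
        _ ≤ density ν (x + j * k₀ + k₀) :=
          density_le_density_add hp hrange hasym hbond hn hces hk₀ hk₀lt (by nlinarith)
        _ = density ν (x + (j + 1) * k₀) := by ring_nf
  refine le_antisymm (le_zero_of_forall_le_window_sum (density_nonneg ν) hn hces (w := R) (B := x)
    fun y hy => ?_) (density_nonneg ν x)
  have hle := Int.ediv_mul_le (y - x) (by omega : k₀ ≠ 0)
  have hlt := Int.lt_ediv_add_one_mul_self (y - x) (by omega : 0 < k₀)
  rw [add_one_mul] at hlt
  calc density ν x ≤ density ν (x + (y - x) / k₀ * k₀) :=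
        hmono _ (Int.ediv_nonneg (by omega) (by omega))
    _ ≤ _ := Finset.single_le_sum (fun u _ => density_nonneg ν u)
        (by rw [Finset.mem_Ioc]; constructor <;> linarith)

lemma density_eq_zero_of_forall_lt (hp : ∀ k, 0 ≤ p k) (hrange : ∀ k : ℤ, R < |k| → p k = 0)
    (hasym : ∀ k : ℤ, 1 ≤ k → p (-k) ≤ p k) (hR : 1 ≤ R) (hpR : 0 < p R) {x : ℤ} (hx : 1 ≤ x)
    (hJ : ∫ η, current p x (x + 1) η ∂ν = 0) (hzero : ∀ z, x < z → density ν z = 0) :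
    density ν x = 0 := by
  have hflux : ∀ k ∈ Finset.Icc 1 R, ∀ u ∈ (Finset.Ioc (x - k) x).erase 0,
      0 ≤ meanFlux p ν u k := by
    intro k hk u hu
    rw [Finset.mem_Icc] at hk
    rw [Finset.mem_erase, Finset.mem_Ioc] at hu
    rw [meanFlux, hzero (u + k) (by omega), sub_zero]
    exact add_nonneg (mul_nonneg (sub_nonneg.mpr (hasym k hk.1)) (occVac_nonneg ν _ _))
      (mul_nonneg (hp _) (density_nonneg ν u))
  have hE := density_sub_le_occVac ν x (x + R)
  rw [hzero (x + R) (by omega), sub_zero] at hE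
  have hmain : p R * density ν x ≤ 0 :=
    calc p R * density ν x ≤ meanFlux p ν x R := by
          rw [meanFlux, hzero (x + R) (by omega), sub_zero]
          nlinarith [hasym R hR]
      _ ≤ ∑ u ∈ (Finset.Ioc (x - R) x).erase 0, meanFlux p ν u R :=
          Finset.single_le_sum (hflux R (by simp [hR]))
            (by rw [Finset.mem_erase, Finset.mem_Ioc]; omega)
      _ ≤ ∑ k ∈ Finset.Icc 1 R, ∑ u ∈ (Finset.Ioc (x - k) x).erase 0, meanFlux p ν u k :=
          Finset.single_le_sum (f := fun k => ∑ u ∈ (Finset.Ioc (x - k) x).erase 0,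
            meanFlux p ν u k) (fun k hk => Finset.sum_nonneg (hflux k hk)) (by simp [hR])
      _ = 0 := by rw [← integral_current_eq_sum_meanFlux hrange ν (by omega), hJ]
  exact le_antisymm (nonpos_of_mul_nonpos_right hmain hpR) (density_nonneg ν x)

lemma density_eq_zero_of_one_le (hp : ∀ k, 0 ≤ p k) (hrange : ∀ k : ℤ, R < |k| → p k = 0)
    (hasym : ∀ k : ℤ, 1 ≤ k → p (-k) ≤ p k) (hpR : 0 < p R)
    (hbond : ∀ m, 0 ≤ m → ∫ η, current p m (m + 1) η ∂ν = 0)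
    (hfar : ∀ z, R ≤ z → density ν z = 0) {x : ℤ} (hx : 1 ≤ x) : density ν x = 0 := by
  rcases le_or_gt R x with hxR | hxR
  · exact hfar x hxR
  suffices ∀ n ≤ R, ∀ z, n ≤ z → 1 ≤ z → density ν z = 0 from this x hxR.le x le_rfl hx
  intro n hn
  induction n, hn using Int.leInductionDown with
  | base => exact fun z hz _ => hfar z hz
  | pred n hn ih =>
    intro z hz hz1
    rcases eq_or_lt_of_le hz with rfl | hz
    · exact density_eq_zero_of_forall_lt hp hrange hasym (by omega) hpR hz1 (hbond _ (by omega))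
        fun z' hz' => ih z' (by omega) (by omega)
    · exact ih z (by omega) hz1

end Densities

theorem zero_current_and_zero_cesaro_density_implies_zero_density_general
    (R : ℤ) (p : ℤ → ℝ) (hp : ∀ k, 0 ≤ p k)
    (hrange : ∀ k : ℤ, R < |k| → p k = 0) (hpR : 0 < p R)
    (hasym : ∀ k : ℤ, 1 ≤ k → p (-k) ≤ p k)
    (hstrict : ∃ k : ℤ, 1 ≤ k ∧ p (-k) < p k)
    (ν νstar : Measure Config) (hν : IsProbabilityMeasure ν)
    (hinv : IsInvariantMeasure p ν)
    (hcur : ∫ η, current p (-1) 1 η ∂ν = 0)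
    (hces : IsCesaroLimit ν νstar)
    (hdens : ∀ x : ℤ, ∫ η, val η x ∂νstar = 0) :
    ∀ x : ℤ, 0 < x → ∫ η, val η x ∂ν = 0 := by
  obtain ⟨k₀, hk₀, hk₀lt⟩ := hstrict
  have hk₀R : k₀ ≤ R := by
    by_contra! h
    rw [hrange k₀ (by rwa [abs_of_pos (by omega)])] at hk₀lt
    linarith [hp (-k₀)]
  have hbond : ∀ m, 0 ≤ m → ∫ η, current p m (m + 1) η ∂ν = 0 :=
    fun m hm => integral_current_eq_zero hrange hinv hcur hm
  obtain ⟨n, hn, hconv⟩ := hces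
  have hdensity : Tendsto (fun k => (n k : ℝ)⁻¹ * ∑ i ∈ Finset.Icc 1 (n k), density ν i) atTop
      (nhds 0) := by
    simpa only [integral_val_translMeasure, zero_add, hdens 0] using hconv _ (continuous_val 0)
  have hfar : ∀ z, R ≤ z → density ν z = 0 := fun z hz =>
    density_eq_zero_of_le hp hrange hasym hbond hn hdensity (Finset.mem_Icc.mpr ⟨hk₀, hk₀R⟩)
      hk₀lt hz
  exact fun x hx => density_eq_zero_of_one_le hp hrange hasym hpR hbond hfar hx

/-- If an invariant measure of the blocked ASEP has zero mean current across
`(-1,1)` and some Cesàro weak limit of its translates has identically zero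
one-site densities, then the invariant measure has zero density at every
positive site. -/
theorem zero_current_and_zero_cesaro_density_implies_zero_density
    (R : ℤ) (hR : 1 < R) (p : ℤ → ℝ) (hp : ∀ k, 0 ≤ p k)
    (hrange : ∀ k : ℤ, R < |k| → p k = 0) (hpR : 0 < p R)
    (hasym : ∀ k : ℤ, 1 ≤ k → p (-k) ≤ p k)
    (hstrict : ∃ k : ℤ, 1 ≤ k ∧ p (-k) < p k)
    (ν νstar : Measure Config) (hν : IsProbabilityMeasure ν)
    (hνs : IsProbabilityMeasure νstar)
    (hinv : IsInvariantMeasure p ν)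
    (hcur : ∫ η, current p (-1) 1 η ∂ν = 0)
    (hces : IsCesaroLimit ν νstar)
    (hdens : ∀ x : ℤ, ∫ η, val η x ∂νstar = 0) :
    ∀ x : ℤ, 0 < x → ∫ η, val η x ∂ν = 0 :=
  zero_current_and_zero_cesaro_density_implies_zero_density_general R p hp hrange hpR hasym hstrict
    ν νstar hν hinv hcur hces hdens
end

section
/- Let r ≥ 0 be an integer, let c_j > 0 for all integers j with |j| ≤ r, let a : ℤ → ℝ satisfy 0 ≤ a(x) ≤ 1 for all x, and define G_i = Σ_{|j| ≤ r} c_j a(i+j). Assume: (i) G_{i+1} ≥ G_i for all i ≥ I₀, for some integer I₀; and (ii) there is a sequence of integers n_k → ∞ such that for every x ∈ ℤ, (1/n_k) Σ_{i=1}^{n_k} a(x+i) → 0 as k → ∞. Then a(x) = 0 for every x ≥ I₀ − r. -/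
open Filter Finset Topology

/-!
Put `i = x + r`. By linearity the Cesàro averages of `G` at `i` are linear combinations of
Cesàro averages of translates of `a`, so they tend to `0` along `n_k`. Since `G` is
nondecreasing from `i` on, each of these averages is at least `G i`; hence `G i ≤ 0`. But
`G i` is a sum of nonnegative terms one of which is `c_{-r} a(x)`, so `a(x) = 0`.
-/

noncomputable def cesaroMean (f : ℤ → ℝ) (x : ℤ) (N : ℕ) : ℝ :=
  (N : ℝ)⁻¹ * ∑ i ∈ Icc 1 N, f (x + i)

lemma cesaroMean_weightedSum (s : Finset ℤ) (c a : ℤ → ℝ) (x : ℤ) (N : ℕ) :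
    cesaroMean (fun i => ∑ j ∈ s, c j * a (i + j)) x N =
      ∑ j ∈ s, c j * cesaroMean a (x + j) N := by
  simp only [cesaroMean, mul_sum]
  rw [sum_comm]
  refine sum_congr rfl fun j _ => sum_congr rfl fun m _ => ?_
  rw [add_right_comm]
  ring

lemma tendsto_cesaroMean_weightedSum {s : Finset ℤ} (c a : ℤ → ℝ) {x : ℤ} {n : ℕ → ℕ}
    (ha : ∀ y, Tendsto (fun k => cesaroMean a y (n k)) atTop (𝓝 0)) :
    Tendsto (fun k => cesaroMean (fun i => ∑ j ∈ s, c j * a (i + j)) x (n k)) atTop (𝓝 0) := by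
  simp only [cesaroMean_weightedSum]
  simpa using tendsto_finsetSum s fun j _ => (ha (x + j)).const_mul (c j)

lemma le_cesaroMean {f : ℤ → ℝ} {x : ℤ} {b : ℝ} {N : ℕ} (hN : 0 < N)
    (hb : ∀ m : ℕ, b ≤ f (x + m)) : b ≤ cesaroMean f x N := by
  rw [cesaroMean, le_inv_mul_iff₀ (by exact_mod_cast hN)]
  simpa [nsmul_eq_mul] using card_nsmul_le_sum (Icc 1 N) (fun m => f (x + m)) b fun m _ => hb m

lemma nonpos_of_forall_le_of_tendsto_cesaroMean {f : ℤ → ℝ} {x : ℤ} {b : ℝ} {n : ℕ → ℕ}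
    (hn : Tendsto n atTop atTop) (hf : Tendsto (fun k => cesaroMean f x (n k)) atTop (𝓝 0))
    (hb : ∀ m : ℕ, b ≤ f (x + m)) : b ≤ 0 :=
  ge_of_tendsto hf <| (hn.eventually_gt_atTop 0).mono fun _ hk => le_cesaroMean hk hb

lemma monotoneOn_Ici_of_le_add_one {β : Type*} [Preorder β] {G : ℤ → β} {I₀ : ℤ}
    (h : ∀ i, I₀ ≤ i → G i ≤ G (i + 1)) : MonotoneOn G (Set.Ici I₀) :=
  monotoneOn_of_le_succ Set.ordConnected_Ici fun i _ hi _ => by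
    simpa [Order.succ_eq_add_one] using h i hi

theorem nonneg_increasing_with_zero_cesaro_vanishes_general
    (r : ℕ) (c : ℤ → ℝ) (hc : ∀ j : ℤ, |j| ≤ (r : ℤ) → 0 < c j)
    (a : ℤ → ℝ) (ha0 : ∀ x, 0 ≤ a x)
    (G : ℤ → ℝ)
    (hG : ∀ i : ℤ, G i = ∑ j ∈ Finset.Icc (-(r : ℤ)) (r : ℤ), c j * a (i + j))
    (I₀ : ℤ) (hmono : ∀ i : ℤ, I₀ ≤ i → G i ≤ G (i + 1))
    (n : ℕ → ℕ) (hn : Tendsto n atTop atTop)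
    (hces : ∀ x : ℤ,
      Tendsto (fun k => (n k : ℝ)⁻¹ * ∑ i ∈ Finset.Icc 1 (n k), a (x + i))
        atTop (nhds 0)) :
    ∀ x : ℤ, I₀ - r ≤ x → a x = 0 := by
  intro x hx
  have hG_mean : Tendsto (fun k => cesaroMean G (x + r) (n k)) atTop (𝓝 0) := by
    rw [funext hG]
    exact tendsto_cesaroMean_weightedSum c a hces
  have hG_nonpos : G (x + r) ≤ 0 :=
    nonpos_of_forall_le_of_tendsto_cesaroMean hn hG_mean fun m =>
      monotoneOn_Ici_of_le_add_one hmono (Set.mem_Ici.2 (by omega))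
        (Set.mem_Ici.2 (by omega)) (by omega)
  have hterm : c (-r) * a x ≤ G (x + r) := by
    have h := single_le_sum (f := fun j => c j * a (x + r + j))
      (fun j hj => mul_nonneg (hc j (abs_le.2 (mem_Icc.1 hj))).le (ha0 _))
      (left_mem_Icc.2 (by omega) : -(r : ℤ) ∈ Icc (-(r : ℤ)) r)
    rwa [add_neg_cancel_right, ← hG] at h
  have hc_pos : 0 < c (-r) := hc _ (by simp)
  exact le_antisymm (nonpos_of_mul_nonpos_right (hterm.trans hG_nonpos) hc_pos) (ha0 x)

/-- If `G_i = Σ_{|j| ≤ r} c_j a(i+j)` (with `c_j > 0` and `0 ≤ a ≤ 1`) is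
nondecreasing for `i ≥ I₀`, and the Cesàro averages
`(1/n_k) Σ_{i=1}^{n_k} a(x+i)` tend to `0` along some sequence `n_k → ∞`
for every `x`, then `a(x) = 0` for every `x ≥ I₀ - r`. -/
theorem nonneg_increasing_with_zero_cesaro_vanishes
    (r : ℕ) (c : ℤ → ℝ) (hc : ∀ j : ℤ, |j| ≤ (r : ℤ) → 0 < c j)
    (a : ℤ → ℝ) (ha0 : ∀ x, 0 ≤ a x) (ha1 : ∀ x, a x ≤ 1)
    (G : ℤ → ℝ)
    (hG : ∀ i : ℤ, G i = ∑ j ∈ Finset.Icc (-(r : ℤ)) (r : ℤ), c j * a (i + j))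
    (I₀ : ℤ) (hmono : ∀ i : ℤ, I₀ ≤ i → G i ≤ G (i + 1))
    (n : ℕ → ℕ) (hn : Tendsto n atTop atTop)
    (hces : ∀ x : ℤ,
      Tendsto (fun k => (n k : ℝ)⁻¹ * ∑ i ∈ Finset.Icc 1 (n k), a (x + i))
        atTop (nhds 0)) :
    ∀ x : ℤ, I₀ - r ≤ x → a x = 0 :=
  nonneg_increasing_with_zero_cesaro_vanishes_general r c hc a ha0 G hG I₀ hmono n hn hces
end
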